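/- Fix 0 ≤ α < n, a real number m ≥ 1, and 0 < ε < 1, and let σ be a positive locally finite Borel measure on ℝⁿ. Suppose J ⊆ I ⊆ K are cubes in ℝⁿ with dist(J, ∂I) > 2√n · ℓ(J)^ε ℓ(I)^{1−ε}. Then P_m^α(J, σ1_{K∖I}) ≤ C (ℓ(J)/ℓ(I))^{m − ε(n+m−α)} · P_m^α(I, σ1_{K∖I}), where C depends only on n, m, α and ε. -/

import Mathlib

open MeasureTheory Set Function
open scoped ENNReal NNReal

noncomputable section

/-- `ℝⁿ` with the Euclidean metric. -/
abbrev Rn (n : ℕ) : Type := EuclideanSpace ℝ (Fin n)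

/-- The closed axes-parallel cube with center `c` and side length `l`. -/
def Cube {n : ℕ} (c : Rn n) (l : ℝ) : Set (Rn n) :=
  {x | ∀ i, |x i - c i| ≤ l / 2}

/-- The reproducing Poisson integral `P^α(Q, μ)` of a cube with center `c`, side length `l`. -/
def Poisson {n : ℕ} (α : ℝ) (c : Rn n) (l : ℝ) (μ : Measure (Rn n)) : ℝ≥0∞ :=
  ∫⁻ x, ENNReal.ofReal ((l / (l + dist x c) ^ 2) ^ ((n : ℝ) - α)) ∂μ

/-- The `m`-th order fractional Poisson integral `P_m^α(Q, μ)`. -/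
def PoissonM {n : ℕ} (α m : ℝ) (c : Rn n) (l : ℝ) (μ : Measure (Rn n)) : ℝ≥0∞ :=
  ∫⁻ y, ENNReal.ofReal (l ^ m / (l + dist y c) ^ ((n : ℝ) + m - α)) ∂μ

/-- The one-tailed Muckenhoupt constant `𝒜₂^α(σ, ω)`, recalling `|Q|^{1-α/n} = ℓ(Q)^{n-α}`. -/
def A2tailed {n : ℕ} (α : ℝ) (σ ω : Measure (Rn n)) : ℝ≥0∞ :=
  ⨆ (c : Rn n) (l : ℝ) (_ : 0 < l),
    Poisson α c l σ * ω (Cube c l) / ENNReal.ofReal (l ^ ((n : ℝ) - α))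

/-- The classical fractional Muckenhoupt constant `A₂^α(σ, ω)`. -/
def A2classical {n : ℕ} (α : ℝ) (σ ω : Measure (Rn n)) : ℝ≥0∞ :=
  ⨆ (c : Rn n) (l : ℝ) (_ : 0 < l),
    σ (Cube c l) * ω (Cube c l) / ENNReal.ofReal (l ^ (2 * ((n : ℝ) - α)))

/-!
For `y ∉ I`, the segment from `c_J ∈ I` to `y` crosses `∂I`, so
`|y - c_J| ≥ ℓ(J)^ε ℓ(I)^{1-ε} = (ℓ(J)/ℓ(I))^ε ℓ(I)`. Together with `|c_J - c_I| ≤ √n ℓ(I)/2`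
this gives `ℓ(I) + |y - c_I| ≤ (2 + √n/2) (ℓ(I)/ℓ(J))^ε (ℓ(J) + |y - c_J|)`. Raising to the
power `n + m - α` compares the kernels of `P_m^α(J, ·)` and `P_m^α(I, ·)` pointwise on `K ∖ I`,
with the factor `(ℓ(J)/ℓ(I))^{m - ε(n+m-α)}`.
-/
lemma center_mem_cube {n : ℕ} (c : Rn n) {l : ℝ} (hl : 0 ≤ l) : c ∈ Cube c l := by
  intro i
  simp only [sub_self, abs_zero]; positivity

lemma isClosed_cube {n : ℕ} (c : Rn n) (l : ℝ) : IsClosed (Cube c l) := by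
  simp only [Cube, ofPred_forall]
  exact isClosed_iInter fun i => isClosed_le (by fun_prop) continuous_const

lemma side_le_of_cube_subset {n : ℕ} (hn : 0 < n) {cJ cI : Rn n} {lJ lI : ℝ} (hlJ : 0 ≤ lJ)
    (h : Cube cJ lJ ⊆ Cube cI lI) : lJ ≤ lI := by
  let shift (s : ℝ) : Rn n := WithLp.toLp 2 fun j => cJ j + s
  have mem (s : ℝ) (hs : |s| ≤ lJ / 2) : shift s ∈ Cube cJ lJ := fun j => by
    simpa [shift] using hs
  let i : Fin n := ⟨0, hn⟩
  have hup := abs_le.1 (h (mem (lJ / 2) (by rw [abs_of_nonneg (by linarith)])) i)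
  have hdown := abs_le.1 (h (mem (-(lJ / 2)) (by rw [abs_neg, abs_of_nonneg (by linarith)])) i)
  simp only [shift] at hup hdown
  linarith [hup.2, hdown.1]

lemma dist_le_of_mem_cube {n : ℕ} {c x : Rn n} {l : ℝ} (hl : 0 ≤ l) (hx : x ∈ Cube c l) :
    dist x c ≤ Real.sqrt n * (l / 2) := by
  have hsum : ∑ i, dist (x i) (c i) ^ 2 ≤ n * (l / 2) ^ 2 := by
    calc ∑ i, dist (x i) (c i) ^ 2 ≤ ∑ _i : Fin n, (l / 2) ^ 2 :=
          Finset.sum_le_sum fun i _ => by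
            rw [Real.dist_eq]
            exact pow_le_pow_left₀ (abs_nonneg _) (hx i) 2
      _ = n * (l / 2) ^ 2 := by simp
  calc dist x c = Real.sqrt (∑ i, dist (x i) (c i) ^ 2) := EuclideanSpace.dist_eq x c
    _ ≤ Real.sqrt (n * (l / 2) ^ 2) := Real.sqrt_le_sqrt hsum
    _ = Real.sqrt n * (l / 2) := by
        rw [Real.sqrt_mul (Nat.cast_nonneg n), Real.sqrt_sq (by positivity)]

lemma infDist_frontier_le_dist {E : Type*} [NormedAddCommGroup E] [NormedSpace ℝ E]
    [FiniteDimensional ℝ E] {S : Set E} {x y : E} (hx : x ∈ S) (hy : y ∉ S) :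
    Metric.infDist x (frontier S) ≤ dist x y := by
  obtain ⟨z, hz, hxz⟩ :=
    exists_mem_frontier_infDist_compl_eq_dist hx fun h => hy (h ▸ mem_univ y)
  calc Metric.infDist x (frontier S) ≤ dist x z := Metric.infDist_le_dist_of_mem hz
    _ = Metric.infDist x Sᶜ := hxz.symm
    _ ≤ dist x y := Metric.infDist_le_dist_of_mem hy

lemma add_le_mul_rpow_div_mul {a b d d' s ε : ℝ} (ha : 0 < a) (hab : a ≤ b) (hε : 0 < ε)
    (hs : 0 ≤ s) (hfar : a ^ ε * b ^ (1 - ε) ≤ d) (hd' : d' ≤ d + s * b) :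
    b + d' ≤ (2 + s) * (b / a) ^ ε * (a + d) := by
  have hb : 0 < b := ha.trans_le hab
  have hR : 1 ≤ (b / a) ^ ε := Real.one_le_rpow ((one_le_div ha).2 hab) hε.le
  have hbR : b = (b / a) ^ ε * (a ^ ε * b ^ (1 - ε)) := by
    rw [← mul_assoc, ← Real.mul_rpow (div_nonneg hb.le ha.le) ha.le, div_mul_cancel₀ b ha.ne',
      ← Real.rpow_add hb, add_sub_cancel, Real.rpow_one]
  have hd : 0 ≤ d := (by positivity : 0 ≤ a ^ ε * b ^ (1 - ε)).trans hfar
  have hbA : b ≤ (b / a) ^ ε * (a + d) :=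
    hbR.trans_le (by gcongr; linarith)
  nlinarith

lemma div_rpow_le_mul_div_rpow {a b A B K ε m t : ℝ} (ha : 0 < a) (hb : 0 < b) (hA : 0 < A)
    (hB : 0 < B) (hK : 0 < K) (ht : 0 ≤ t) (hBA : B ≤ K * (b / a) ^ ε * A) :
    a ^ m / A ^ t ≤ K ^ t * (a / b) ^ (m - ε * t) * (b ^ m / B ^ t) := by
  have hu : 0 < (a / b) ^ (ε * t) := by positivity
  have hpow : (K * (b / a) ^ ε * A) ^ t = K ^ t * ((a / b) ^ (ε * t))⁻¹ * A ^ t := by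
    rw [Real.mul_rpow (by positivity) hA.le, Real.mul_rpow hK.le (by positivity),
      ← Real.rpow_mul (by positivity), ← inv_div, Real.inv_rpow (by positivity)]
  have hsub : (a / b) ^ (m - ε * t) = a ^ m / b ^ m / (a / b) ^ (ε * t) := by
    rw [Real.rpow_sub (by positivity), Real.div_rpow ha.le hb.le]
  calc a ^ m / A ^ t
        = K ^ t * (a / b) ^ (m - ε * t) * b ^ m / (K * (b / a) ^ ε * A) ^ t := by
        rw [hpow, hsub]
        field_simp
    _ ≤ K ^ t * (a / b) ^ (m - ε * t) * (b ^ m / B ^ t) := by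
        rw [mul_div_assoc]
        gcongr

lemma poissonM_restrict_le_of_forall_mem {n : ℕ} {α m C l l' : ℝ} {c c' : Rn n}
    {σ : Measure (Rn n)} {S : Set (Rn n)} (hS : MeasurableSet S) (hC : 0 ≤ C)
    (h : ∀ y ∈ S, l ^ m / (l + dist y c) ^ ((n : ℝ) + m - α) ≤
      C * (l' ^ m / (l' + dist y c') ^ ((n : ℝ) + m - α))) :
    PoissonM α m c l (σ.restrict S) ≤ ENNReal.ofReal C * PoissonM α m c' l' (σ.restrict S) := by
  rw [PoissonM, PoissonM, ← lintegral_const_mul' _ _ ENNReal.ofReal_ne_top]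
  exact setLIntegral_mono' hS fun y hy =>
    (ENNReal.ofReal_le_ofReal (h y hy)).trans_eq (ENNReal.ofReal_mul hC)

theorem statement15_general
    (n : ℕ) (hn : 0 < n) (α m ε : ℝ) (hαn : α < n)
    (hm : 1 ≤ m) (hε0 : 0 < ε) :
    ∃ C : ℝ, 0 < C ∧
      ∀ σ : Measure (Rn n), IsLocallyFiniteMeasure σ →
      ∀ (cJ cI cK : Rn n) (lJ lI lK : ℝ), 0 < lJ → 0 < lI → 0 < lK →
        Cube cJ lJ ⊆ Cube cI lI → Cube cI lI ⊆ Cube cK lK →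
        (∀ x ∈ Cube cJ lJ,
          2 * Real.sqrt n * lJ ^ ε * lI ^ (1 - ε) <
            Metric.infDist x (frontier (Cube cI lI))) →
        PoissonM α m cJ lJ (σ.restrict (Cube cK lK \ Cube cI lI)) ≤
          ENNReal.ofReal (C * (lJ / lI) ^ (m - ε * ((n : ℝ) + m - α))) *
            PoissonM α m cI lI (σ.restrict (Cube cK lK \ Cube cI lI)) := by
  have hsqrt : 1 ≤ Real.sqrt n := Real.one_le_sqrt.2 (Nat.one_le_cast.2 hn)
  refine ⟨(2 + Real.sqrt n / 2) ^ ((n : ℝ) + m - α), by positivity, ?_⟩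
  intro σ _ cJ cI cK lJ lI lK hlJ hlI _ hJI _ hsep
  have hcJ : cJ ∈ Cube cI lI := hJI (center_mem_cube cJ hlJ.le)
  refine poissonM_restrict_le_of_forall_mem
    ((isClosed_cube cK lK).measurableSet.diff (isClosed_cube cI lI).measurableSet)
    (by positivity) fun y ⟨_, hyI⟩ => ?_
  have hfar : lJ ^ ε * lI ^ (1 - ε) ≤ dist y cJ := by
    have hsep_y := (hsep cJ (center_mem_cube cJ hlJ.le)).trans_le
      ((infDist_frontier_le_dist hcJ hyI).trans_eq (dist_comm cJ y))
    have : 0 ≤ lJ ^ ε * lI ^ (1 - ε) := by positivity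
    nlinarith
  have hdist : dist y cI ≤ dist y cJ + Real.sqrt n / 2 * lI := by
    linarith [dist_triangle y cJ cI, dist_le_of_mem_cube hlI.le hcJ]
  exact div_rpow_le_mul_div_rpow hlJ hlI (by positivity) (by positivity) (by positivity)
    (by linarith) (add_le_mul_rpow_div_mul hlJ (side_le_of_cube_subset hn hlJ.le hJI) hε0
      (by positivity) hfar hdist)

/-- The Poisson decay estimate: if `J ⊆ I ⊆ K` are cubes with
`dist(J, ∂I) > 2√n ℓ(J)^ε ℓ(I)^{1-ε}`, then
`P_m^α(J, σ 1_{K∖I}) ≤ C (ℓ(J)/ℓ(I))^{m - ε(n+m-α)} P_m^α(I, σ 1_{K∖I})`, where `C`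
depends only on `n, m, α, ε`. -/
theorem statement15
    (n : ℕ) (hn : 0 < n) (α m ε : ℝ) (hα0 : 0 ≤ α) (hαn : α < n)
    (hm : 1 ≤ m) (hε0 : 0 < ε) (hε1 : ε < 1) :
    ∃ C : ℝ, 0 < C ∧
      ∀ σ : Measure (Rn n), IsLocallyFiniteMeasure σ →
      ∀ (cJ cI cK : Rn n) (lJ lI lK : ℝ), 0 < lJ → 0 < lI → 0 < lK →
        Cube cJ lJ ⊆ Cube cI lI → Cube cI lI ⊆ Cube cK lK →
        (∀ x ∈ Cube cJ lJ,
          2 * Real.sqrt n * lJ ^ ε * lI ^ (1 - ε) <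
            Metric.infDist x (frontier (Cube cI lI))) →
        PoissonM α m cJ lJ (σ.restrict (Cube cK lK \ Cube cI lI)) ≤
          ENNReal.ofReal (C * (lJ / lI) ^ (m - ε * ((n : ℝ) + m - α))) *
            PoissonM α m cI lI (σ.restrict (Cube cK lK \ Cube cI lI)) :=
  statement15_general n hn α m ε hαn hm hε0
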